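/- arXiv:math/0501131 — 2 statements merged into one kernel-verified Lean document; each statement's English description precedes it below -/
import Mathlib

section
/- Let ψ ∈ Ω∞ and let κ ∈ 𝒦 have restricted growth with respect to ψ (κ ∈ R(ψ)). Then for every x ∈ M₊(ψ) the function φ_κ(x) is almost piecewise linear at infinity: L(φ_κ(x) − p({φ_κ(x)(n)}_{n≥1})) = 0 for every Banach limit L ∈ BL(ℝ₊). -/
open MeasureTheory Filter Set

noncomputable section

/-- `f` is bounded and continuous on `[0,∞)`, i.e. (the restriction of) `f`
belongs to `C_b([0,∞))`. -/
def IsCb (f : ℝ → ℝ) : Prop :=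
  ContinuousOn f (Ici 0) ∧ ∃ M : ℝ, ∀ t ∈ Ici (0:ℝ), |f t| ≤ M

/-- Bounded real sequences, i.e. elements of `ℓ∞(ℕ)`. -/
def IsBddSeq (a : ℕ → ℝ) : Prop := ∃ M : ℝ, ∀ n, |a n| ≤ M

/-- A Banach limit on `C_b([0,∞))`: a positive linear translation-invariant
functional with `L(1) = 1`.  (The underlying map is defined on all of `ℝ → ℝ`;
the axioms only refer to its values on bounded continuous functions on `[0,∞)`.) -/
structure BanachLimitR where
  toFun : (ℝ → ℝ) → ℝ
  map_add : ∀ f g : ℝ → ℝ, IsCb f → IsCb g →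
    toFun (fun t => f t + g t) = toFun f + toFun g
  map_smul : ∀ (c : ℝ) (f : ℝ → ℝ), IsCb f → toFun (fun t => c * f t) = c * toFun f
  pos : ∀ f : ℝ → ℝ, IsCb f → (∀ t ∈ Ici (0:ℝ), 0 ≤ f t) → 0 ≤ toFun f
  map_one : toFun (fun _ => 1) = 1
  shift_inv : ∀ f : ℝ → ℝ, IsCb f → ∀ s : ℝ, 0 ≤ s → toFun (fun t => f (t + s)) = toFun f

/-- A Banach limit on `ℓ∞(ℕ)`: a positive linear shift-invariant functional
with `L'(1) = 1`. -/
structure BanachLimitN where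
  toFun : (ℕ → ℝ) → ℝ
  map_add : ∀ a b : ℕ → ℝ, IsBddSeq a → IsBddSeq b →
    toFun (fun n => a n + b n) = toFun a + toFun b
  map_smul : ∀ (c : ℝ) (a : ℕ → ℝ), IsBddSeq a → toFun (fun n => c * a n) = c * toFun a
  pos : ∀ a : ℕ → ℝ, IsBddSeq a → (∀ n, 0 ≤ a n) → 0 ≤ toFun a
  map_one : toFun (fun _ => 1) = 1
  shift_inv : ∀ a : ℕ → ℝ, IsBddSeq a → toFun (fun n => a (n + 1)) = toFun a

/-- An element of `SC_b^*([0,∞))`: a positive linear functional on `C_b([0,∞))`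
with `γ(1) = 1` vanishing on `C₀([0,∞))`. -/
structure SCbStar where
  toFun : (ℝ → ℝ) → ℝ
  map_add : ∀ f g : ℝ → ℝ, IsCb f → IsCb g →
    toFun (fun t => f t + g t) = toFun f + toFun g
  map_smul : ∀ (c : ℝ) (f : ℝ → ℝ), IsCb f → toFun (fun t => c * f t) = c * toFun f
  pos : ∀ f : ℝ → ℝ, IsCb f → (∀ t ∈ Ici (0:ℝ), 0 ≤ f t) → 0 ≤ toFun f
  map_one : toFun (fun _ => 1) = 1
  vanish : ∀ f : ℝ → ℝ, IsCb f → Tendsto f atTop (nhds 0) → toFun f = 0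

/-- A positive linear functional on `C_b([0,∞))`. -/
structure PosLinFunc where
  toFun : (ℝ → ℝ) → ℝ
  map_add : ∀ f g : ℝ → ℝ, IsCb f → IsCb g →
    toFun (fun t => f t + g t) = toFun f + toFun g
  map_smul : ∀ (c : ℝ) (f : ℝ → ℝ), IsCb f → toFun (fun t => c * f t) = c * toFun f
  pos : ∀ f : ℝ → ℝ, IsCb f → (∀ t ∈ Ici (0:ℝ), 0 ≤ f t) → 0 ≤ toFun f

/-- `ψ ∈ Ω_∞`: concave on `[0,∞)`, nonnegative, `ψ(t) → 0` as `t → 0⁺` and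
`ψ(t) → ∞` as `t → ∞`. -/
def OmegaInf (ψ : ℝ → ℝ) : Prop :=
  ConcaveOn ℝ (Ici 0) ψ ∧ (∀ t ∈ Ici (0:ℝ), 0 ≤ ψ t) ∧
    Tendsto ψ (nhdsWithin 0 (Ioi 0)) (nhds 0) ∧ Tendsto ψ atTop atTop

/-- The decreasing rearrangement `x*` of a measurable function `x` on `[0,∞)`. -/
def decRearr (x : ℝ → ℝ) (t : ℝ) : ℝ :=
  sInf {s : ℝ | 0 ≤ s ∧ volume {u : ℝ | 0 ≤ u ∧ s < |x u|} ≤ ENNReal.ofReal t}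

/-- The weighted mean function `φ(x)(t) = (1/ψ(t)) ∫₀ᵗ x*(s) ds`. -/
def phiW (ψ x : ℝ → ℝ) (t : ℝ) : ℝ := (∫ s in (0:ℝ)..t, decRearr x s) / ψ t

/-- Membership in the Marcinkiewicz space `M(ψ)`. -/
def MemM (ψ x : ℝ → ℝ) : Prop :=
  Measurable x ∧ ∃ M : ℝ, ∀ t > (0:ℝ), phiW ψ x t ≤ M

/-- Membership in the positive cone `M₊(ψ)`. -/
def MemMplus (ψ x : ℝ → ℝ) : Prop := MemM ψ x ∧ ∀ t ∈ Ici (0:ℝ), 0 ≤ x t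

/-- The Marcinkiewicz norm `‖x‖_{M(ψ)} = sup_{t>0} φ(x)(t)`. -/
def MNorm (ψ x : ℝ → ℝ) : ℝ := ⨆ t > (0:ℝ), phiW ψ x t

/-- `κ ∈ 𝒦`: strictly increasing, invertible (as a map of `[0,∞)` onto itself),
differentiable, unbounded, with `κ(0) = 0`. -/
def MemK (κ : ℝ → ℝ) : Prop :=
  StrictMonoOn κ (Ici 0) ∧ κ 0 = 0 ∧ MapsTo κ (Ici 0) (Ici 0) ∧
    SurjOn κ (Ici 0) (Ici 0) ∧ DifferentiableOn ℝ κ (Ici 0) ∧ Tendsto κ atTop atTop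

/-- `f_{L,κ}(x) = L(φ_κ(x))` for a Banach limit `L` on `C_b([0,∞))`; the function
`φ_κ(x)`, bounded and continuous on `(0,∞)`, is fed to `L` as `t ↦ φ_κ(x)(max t 1)`. -/
def fL (L : BanachLimitR) (ψ κ x : ℝ → ℝ) : ℝ :=
  L.toFun fun t => phiW ψ x (κ (max t 1))

/-- `f_{L',κ}(x) = L'({φ(x)(κ(n))}ₙ)` for a Banach limit `L'` on `ℓ∞(ℕ)`. -/
def fLN (L' : BanachLimitN) (ψ κ x : ℝ → ℝ) : ℝ :=
  L'.toFun fun n => phiW ψ x (κ n)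

/-- `κ` has restricted growth with respect to `ψ` (`κ ∈ R(ψ)`): the sequence
`ψ(κ(n))/ψ(κ(n+1))` is almost convergent to `1`. -/
def RestrictedGrowth (ψ κ : ℝ → ℝ) : Prop :=
  ∀ L' : BanachLimitN, L'.toFun (fun n => ψ (κ n) / ψ (κ ((n:ℝ) + 1))) = 1

/-- `κ` has dominated growth with respect to `ψ` (`κ ∈ D(ψ)`):
`(ψ∘κ)'(t)/(ψ∘κ)(t) < C/t` for some `C > 0` and all `t > 0`. -/
def DominatedGrowth (ψ κ : ℝ → ℝ) : Prop :=
  (∀ t > (0:ℝ), DifferentiableAt ℝ (fun u => ψ (κ u)) t) ∧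
    ∃ C > (0:ℝ), ∀ t > (0:ℝ), deriv (fun u => ψ (κ u)) t / ψ (κ t) < C / t

/-- `κ` is of exponential increase: `κ(t + C) > 2κ(t)` for some `C > 0` and all `t > 0`. -/
def ExpIncrease (κ : ℝ → ℝ) : Prop := ∃ C > (0:ℝ), ∀ t > (0:ℝ), 2 * κ t < κ (t + C)

/-- The piecewise linear extension map `p : ℓ∞(ℕ) → C_b([0,∞))`. -/
def plExt (a : ℕ → ℝ) (t : ℝ) : ℝ :=
  a ⌊t⌋₊ + (a (⌊t⌋₊ + 1) - a ⌊t⌋₊) * (t - (⌊t⌋₊ : ℝ))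

/-- The Cesàro mean `C(g)(μ) = (1/μ) ∫₀^μ g(s) ds` (with `C(g)(0) := g(0)`). -/
def cesaro (g : ℝ → ℝ) (μ : ℝ) : ℝ :=
  if μ = 0 then g 0 else (∫ s in (0:ℝ)..μ, g s) / μ

/-- `M_k(g)(λ) = (1/k(λ)) ∫₀^λ g(s) k'(s) ds` (with `M_k(g)(0) := g(0)`). -/
def MkFun (k g : ℝ → ℝ) (l : ℝ) : ℝ :=
  if l = 0 then g 0 else (∫ s in (0:ℝ)..l, g s * deriv k s) / k l

/-- The Connes-Dixmier functional `τ_{γ,k}(x) = γ(M_k(φ(x)))`; the function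
`M_k(φ(x))`, bounded and continuous on `(0,∞)`, is fed to `γ` as `t ↦ M_k(φ(x))(max t 1)`. -/
def tauCD (γ : SCbStar) (ψ k x : ℝ → ℝ) : ℝ :=
  γ.toFun fun t => MkFun k (phiW ψ x) (max t 1)

/-- A set `Λ` of Banach limits has the Cesàro limit property if for each
`g ∈ C_b([0,∞))` both `liminf C(g)` and `limsup C(g)` are attained as values `L(g)`, `L ∈ Λ`. -/
def CesaroLimitProp (Λ : Set BanachLimitR) : Prop :=
  ∀ g : ℝ → ℝ, IsCb g →
    (∃ L ∈ Λ, L.toFun g = liminf (cesaro g) atTop) ∧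
    (∃ L ∈ Λ, L.toFun g = limsup (cesaro g) atTop)

/-- Dilation invariance of an element of `SC_b^*([0,∞))`. -/
def DilationInvariant (ω : SCbStar) : Prop :=
  ∀ g : ℝ → ℝ, IsCb g → ∀ a : ℝ, 0 < a → ω.toFun (fun t => g (a * t)) = ω.toFun g


/-! On `[n, n + 1]` both `φ_κ(x)` and its piecewise linear interpolant lie, by monotonicity of
`∫₀^· x*` and of `ψ`, between `rₙ aₙ` and `aₙ₊₁ / rₙ`, where `aₙ = φ_κ(x)(n)` and
`rₙ = ψ(κ(n)) / ψ(κ(n + 1)) ≤ 1`; hence they differ by at most `aₙ₊₁ - aₙ + 2‖x‖(1 - rₙ)`.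
Now `L ∘ p` is a Banach limit on `ℓ∞(ℕ)`: it kills the differences `aₙ₊₁ - aₙ`, and sends `rₙ`
to `1` because `κ ∈ R(ψ)`. -/

lemma mem_Icc_floor {t : ℝ} (ht : 0 ≤ t) : t ∈ Icc (⌊t⌋₊ : ℝ) (⌊t⌋₊ + 1) :=
  ⟨Nat.floor_le ht, (Nat.lt_floor_add_one t).le⟩

section PlExt

variable {b : ℕ → ℝ} {n : ℕ} {T c : ℝ}

lemma plExt_of_mem_Icc (hT : T ∈ Icc (n : ℝ) (n + 1)) :
    plExt b T = (1 - (T - n)) * b n + (T - n) * b (n + 1) := by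
  rcases hT.2.lt_or_eq with hlt | rfl
  · rw [plExt, Nat.floor_eq_on_Ico n T ⟨hT.1, hlt⟩]
    ring
  · rw [plExt, show (n : ℝ) + 1 = (n + 1 : ℕ) by push_cast; ring, Nat.floor_natCast]
    push_cast
    ring

lemma le_plExt_of_mem_Icc (hT : T ∈ Icc (n : ℝ) (n + 1)) (h₀ : c ≤ b n) (h₁ : c ≤ b (n + 1)) :
    c ≤ plExt b T := by
  rw [plExt_of_mem_Icc hT]
  nlinarith [hT.1, hT.2]

lemma plExt_le_of_mem_Icc (hT : T ∈ Icc (n : ℝ) (n + 1)) (h₀ : b n ≤ c) (h₁ : b (n + 1) ≤ c) :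
    plExt b T ≤ c := by
  rw [plExt_of_mem_Icc hT]
  nlinarith [hT.1, hT.2]

lemma abs_sub_plExt_le_of_mem_Icc {y : ℝ} (hT : T ∈ Icc (n : ℝ) (n + 1))
    (h₀ : |y - b n| ≤ c) (h₁ : |y - b (n + 1)| ≤ c) : |y - plExt b T| ≤ c := by
  rw [abs_le] at *
  constructor
  · linarith [plExt_le_of_mem_Icc (c := y + c) hT (by linarith) (by linarith)]
  · linarith [le_plExt_of_mem_Icc (c := y - c) hT (by linarith) (by linarith)]

lemma plExt_nonneg (hb : ∀ n, 0 ≤ b n) (hT : 0 ≤ T) : 0 ≤ plExt b T :=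
  le_plExt_of_mem_Icc (mem_Icc_floor hT) (hb _) (hb _)

lemma abs_plExt_le (hb : ∀ n, |b n| ≤ c) (hT : 0 ≤ T) : |plExt b T| ≤ c :=
  abs_le.2 ⟨le_plExt_of_mem_Icc (mem_Icc_floor hT) (abs_le.1 (hb _)).1 (abs_le.1 (hb _)).1,
    plExt_le_of_mem_Icc (mem_Icc_floor hT) (abs_le.1 (hb _)).2 (abs_le.1 (hb _)).2⟩

lemma plExt_add (b b' : ℕ → ℝ) (T : ℝ) :
    plExt (fun n => b n + b' n) T = plExt b T + plExt b' T := by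
  simp only [plExt]; ring

lemma plExt_const_mul (c : ℝ) (b : ℕ → ℝ) (T : ℝ) :
    plExt (fun n => c * b n) T = c * plExt b T := by
  simp only [plExt]; ring

lemma plExt_const (c T : ℝ) : plExt (fun _ => c) T = c := by
  simp [plExt]

lemma plExt_succ (b : ℕ → ℝ) (hT : 0 ≤ T) : plExt (fun n => b (n + 1)) T = plExt b (T + 1) := by
  rw [plExt, plExt, Nat.floor_add_one hT]
  push_cast
  ring

lemma locallyFinite_Icc_natCast : LocallyFinite fun n : ℕ => Icc (n : ℝ) (n + 1) := by
  intro t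
  refine ⟨Iio (t + 1), Iio_mem_nhds (lt_add_one t), (finite_lt_nat ⌈t + 1⌉₊).subset ?_⟩
  rintro n ⟨s, ⟨hns, -⟩, hst⟩
  exact Nat.lt_ceil.2 (hns.trans_lt hst)

lemma continuousOn_plExt (b : ℕ → ℝ) : ContinuousOn (plExt b) (Ici 0) := by
  have hcover : (⋃ n : ℕ, Icc (n : ℝ) (n + 1)) = Ici 0 := by
    refine Subset.antisymm (iUnion_subset fun n s hs => (Nat.cast_nonneg n).trans hs.1) ?_
    exact fun t ht => mem_iUnion.2 ⟨_, mem_Icc_floor ht⟩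
  rw [← hcover]
  refine locallyFinite_Icc_natCast.continuousOn_iUnion (fun _ => isClosed_Icc) fun n => ?_
  exact ContinuousOn.congr (by fun_prop) fun T hT => plExt_of_mem_Icc (b := b) hT

end PlExt

section IsCb

variable {f g : ℝ → ℝ}

lemma isCb_const (c : ℝ) : IsCb fun _ => c :=
  ⟨continuousOn_const, |c|, fun _ _ => le_rfl⟩

lemma IsCb.sub (hf : IsCb f) (hg : IsCb g) : IsCb fun t => f t - g t := by
  obtain ⟨hfc, Mf, hMf⟩ := hf
  obtain ⟨hgc, Mg, hMg⟩ := hg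
  exact ⟨hfc.sub hgc, Mf + Mg, fun t ht =>
    (abs_sub _ _).trans (add_le_add (hMf t ht) (hMg t ht))⟩

lemma IsCb.comp_add_const (hf : IsCb f) {s : ℝ} (hs : 0 ≤ s) : IsCb fun t => f (t + s) := by
  obtain ⟨hfc, M, hM⟩ := hf
  have hmaps : MapsTo (fun t => t + s) (Ici 0) (Ici 0) := fun t (ht : 0 ≤ t) =>
    show 0 ≤ t + s by linarith
  exact ⟨hfc.comp (by fun_prop) hmaps, M, fun t ht => hM _ (hmaps ht)⟩

lemma isCb_comp_max_one {M : ℝ} (hf : ContinuousOn f (Ici 1)) (hM : ∀ t ≥ 1, |f t| ≤ M) :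
    IsCb fun t => f (max t 1) :=
  ⟨hf.comp (by fun_prop) fun t _ => le_max_right t 1, M, fun t _ => hM _ (le_max_right t 1)⟩

end IsCb

namespace BanachLimitR

variable (L : BanachLimitR) {f g : ℝ → ℝ}

lemma toFun_const (c : ℝ) : L.toFun (fun _ => c) = c := by
  simpa only [mul_one, L.map_one] using L.map_smul c (fun _ => 1) (isCb_const 1)

lemma toFun_sub (hf : IsCb f) (hg : IsCb g) :
    L.toFun (fun t => f t - g t) = L.toFun f - L.toFun g := by
  have h := L.map_add (fun t => f t - g t) g (hf.sub hg) hg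
  simp only [sub_add_cancel] at h
  linarith

lemma toFun_mono (hf : IsCb f) (hg : IsCb g) (h : ∀ t ≥ 0, f t ≤ g t) :
    L.toFun f ≤ L.toFun g := by
  have := L.pos _ (hg.sub hf) fun t ht => sub_nonneg.2 (h t ht)
  linarith [L.toFun_sub hg hf]

lemma abs_toFun_le (hf : IsCb f) (hg : IsCb g) (h : ∀ t ≥ 0, |f t| ≤ g t) :
    |L.toFun f| ≤ L.toFun g := by
  have hneg : L.toFun (fun t => 0 - f t) = -L.toFun f := by
    rw [L.toFun_sub (isCb_const 0) hf, L.toFun_const, zero_sub]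
  refine abs_le.2 ⟨?_, L.toFun_mono hf hg fun t ht => (le_abs_self _).trans (h t ht)⟩
  rw [neg_le, ← hneg]
  exact L.toFun_mono ((isCb_const 0).sub hf) hg fun t ht => by
    linarith [neg_abs_le (f t), h t ht]

lemma toFun_congr_of_eqOn_Ici (hf : IsCb f) (hg : IsCb g) {s : ℝ} (hs : 0 ≤ s)
    (h : ∀ t ≥ s, f t = g t) : L.toFun f = L.toFun g := by
  rw [← L.shift_inv f hf s hs, ← L.shift_inv g hg s hs]
  have hfg : ∀ t ≥ 0, f (t + s) = g (t + s) := fun t ht => h _ (by linarith)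
  have hf' := hf.comp_add_const hs
  have hg' := hg.comp_add_const hs
  exact le_antisymm (L.toFun_mono hf' hg' fun t ht => (hfg t ht).le)
    (L.toFun_mono hg' hf' fun t ht => (hfg t ht).ge)

end BanachLimitR

section IsBddSeq

variable {a b : ℕ → ℝ}

lemma isBddSeq_const (c : ℝ) : IsBddSeq fun _ => c := ⟨|c|, fun _ => le_rfl⟩

lemma IsBddSeq.add (ha : IsBddSeq a) (hb : IsBddSeq b) : IsBddSeq fun n => a n + b n := by
  obtain ⟨Ma, hMa⟩ := ha
  obtain ⟨Mb, hMb⟩ := hb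
  exact ⟨Ma + Mb, fun n => (abs_add_le _ _).trans (add_le_add (hMa n) (hMb n))⟩

lemma IsBddSeq.const_mul (c : ℝ) (ha : IsBddSeq a) : IsBddSeq fun n => c * a n := by
  obtain ⟨M, hM⟩ := ha
  exact ⟨|c| * M, fun n => by
    rw [abs_mul]
    exact mul_le_mul_of_nonneg_left (hM n) (abs_nonneg c)⟩

lemma IsBddSeq.sub (ha : IsBddSeq a) (hb : IsBddSeq b) : IsBddSeq fun n => a n - b n := by
  simpa only [neg_one_mul, ← sub_eq_add_neg] using ha.add (hb.const_mul (-1))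

lemma IsBddSeq.comp (ha : IsBddSeq a) (m : ℕ → ℕ) : IsBddSeq fun n => a (m n) := by
  obtain ⟨M, hM⟩ := ha
  exact ⟨M, fun n => hM (m n)⟩

lemma isBddSeq_of_mem_Icc {lo hi : ℝ} (ha : ∀ n, a n ∈ Icc lo hi) : IsBddSeq a :=
  ⟨max |lo| |hi|, fun n => abs_le_max_abs_abs (ha n).1 (ha n).2⟩

end IsBddSeq

namespace BanachLimitN

variable (L : BanachLimitN) {a b : ℕ → ℝ}

lemma toFun_const (c : ℝ) : L.toFun (fun _ => c) = c := by
  simpa only [mul_one, L.map_one] using L.map_smul c (fun _ => 1) (isBddSeq_const 1)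

lemma toFun_sub (ha : IsBddSeq a) (hb : IsBddSeq b) :
    L.toFun (fun n => a n - b n) = L.toFun a - L.toFun b := by
  have h := L.map_add (fun n => a n - b n) b (ha.sub hb) hb
  simp only [sub_add_cancel] at h
  linarith

lemma toFun_comp_pred (ha : IsBddSeq a) : L.toFun (fun n => a (n - 1)) = L.toFun a := by
  simpa only [Nat.add_sub_cancel] using (L.shift_inv _ (ha.comp fun n => n - 1)).symm

lemma toFun_succ_sub_add_mul_one_sub (ha : IsBddSeq a) (hb : IsBddSeq b) (c : ℝ) :
    L.toFun (fun n => a (n + 1) - a n + c * (1 - b n)) = c * (1 - L.toFun b) := by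
  have hb' : IsBddSeq fun n => 1 - b n := (isBddSeq_const 1).sub hb
  rw [L.map_add _ _ ((ha.comp _).sub ha) (hb'.const_mul c), L.toFun_sub (ha.comp _) ha,
    L.shift_inv a ha, L.map_smul c _ hb', L.toFun_sub (isBddSeq_const 1) hb, L.toFun_const]
  ring

end BanachLimitN

lemma isCb_plExt_max_one {b : ℕ → ℝ} (hb : IsBddSeq b) : IsCb fun t => plExt b (max t 1) :=
  let ⟨_, hM⟩ := hb
  isCb_comp_max_one ((continuousOn_plExt b).mono (Ici_subset_Ici.2 zero_le_one))
    fun _ ht => abs_plExt_le hM (zero_le_one.trans ht)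

/-- The Banach limit `L ∘ p` on `ℓ∞(ℕ)`. -/
def BanachLimitR.toSeq (L : BanachLimitR) : BanachLimitN where
  toFun b := L.toFun fun t => plExt b (max t 1)
  map_add b b' hb hb' := by
    simpa only [plExt_add] using L.map_add _ _ (isCb_plExt_max_one hb) (isCb_plExt_max_one hb')
  map_smul c b hb := by
    simpa only [plExt_const_mul] using L.map_smul c _ (isCb_plExt_max_one hb)
  pos b hb hb₀ := L.pos _ (isCb_plExt_max_one hb) fun t _ =>
    plExt_nonneg hb₀ (zero_le_one.trans (le_max_right t 1))
  map_one := by simpa only [plExt_const] using L.map_one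
  shift_inv b hb := by
    have hcb := isCb_plExt_max_one hb
    rw [← L.shift_inv _ hcb 1 zero_le_one]
    refine L.toFun_congr_of_eqOn_Ici (isCb_plExt_max_one (hb.comp _))
      (hcb.comp_add_const zero_le_one) zero_le_one fun t ht => ?_
    rw [max_eq_left ht, max_eq_left (by linarith), plExt_succ b (by linarith)]

theorem BanachLimitR.toFun_sub_plExt_eq_zero (L : BanachLimitR) {g : ℝ → ℝ} {a v : ℕ → ℝ}
    (hg : IsCb fun t => g (max t 1)) (ha : IsBddSeq a) (hv : IsBddSeq v) (hv₀ : ∀ n, 0 ≤ v n)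
    (hgv : ∀ (n : ℕ), ∀ T ∈ Icc (n : ℝ) (n + 1), 1 ≤ T → |g T - plExt a T| ≤ v n)
    (hLv : L.toSeq.toFun v = 0) :
    L.toFun (fun t => g (max t 1) - plExt a (max t 1)) = 0 := by
  -- `p(d) ≥ vₙ` on `[n, n + 1]`, since `dₙ` and `dₙ₊₁` both contain the summand `vₙ`.
  set d : ℕ → ℝ := fun n => v (n - 1) + v n
  have hd : IsBddSeq d := (hv.comp _).add hv
  have hLd : L.toSeq.toFun d = 0 := by
    rw [L.toSeq.map_add _ _ (hv.comp _) hv, L.toSeq.toFun_comp_pred hv, hLv, add_zero]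
  have hbound : ∀ t ≥ 0, |g (max t 1) - plExt a (max t 1)| ≤ plExt d (max t 1) := by
    intro t _
    have hT := mem_Icc_floor (zero_le_one.trans (le_max_right t 1))
    refine (hgv _ _ hT (le_max_right t 1)).trans (le_plExt_of_mem_Icc hT ?_ ?_)
    · linarith [hv₀ (⌊max t 1⌋₊ - 1)]
    · simp only [d, Nat.add_sub_cancel]
      linarith [hv₀ (⌊max t 1⌋₊ + 1)]
  have := L.abs_toFun_le (hg.sub (isCb_plExt_max_one ha)) (isCb_plExt_max_one hd) hbound
  exact abs_nonpos_iff.1 (this.trans_eq hLd)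

lemma ratio_sandwich {F₀ F F₁ ψ₀ ψ ψ₁ : ℝ} (hF₀ : 0 ≤ F₀) (hF₀F : F₀ ≤ F) (hFF₁ : F ≤ F₁)
    (hψ₀ : 0 ≤ ψ₀) (hψ₀ψ : ψ₀ ≤ ψ) (hψψ₁ : ψ ≤ ψ₁) (hψ : 0 < ψ) :
    ψ₀ / ψ₁ * (F₀ / ψ₀) ≤ F / ψ ∧ ψ₀ / ψ₁ * (F / ψ) ≤ F₁ / ψ₁ := by
  have hψ₁ : 0 < ψ₁ := hψ.trans_le hψψ₁
  have hF : 0 ≤ F := hF₀.trans hF₀F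
  -- For `ψ₀ = 0` both left-hand sides vanish, as `x / 0 = 0`.
  rcases hψ₀.eq_or_lt with rfl | hψ₀'
  · simp only [zero_div, zero_mul]
    exact ⟨div_nonneg hF hψ.le, div_nonneg (hF.trans hFF₁) hψ₁.le⟩
  constructor
  · rw [div_mul_div_comm, mul_comm ψ₀, mul_div_mul_right _ _ hψ₀'.ne']
    exact div_le_div₀ hF hF₀F hψ hψψ₁
  · calc ψ₀ / ψ₁ * (F / ψ) = ψ₀ / ψ * (F / ψ₁) := by ring
      _ ≤ F / ψ₁ := mul_le_of_le_one_left (div_nonneg hF hψ₁.le) ((div_le_one hψ).2 hψ₀ψ)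
      _ ≤ F₁ / ψ₁ := div_le_div_of_nonneg_right hFF₁ hψ₁.le

lemma abs_sub_le_of_ratio_bounds {r a b M y y' : ℝ} (hr : r ≤ 1) (ha : a ≤ M)
    (hy : r * a ≤ y ∧ r * y ≤ b ∧ y ≤ M) (hy' : r * a ≤ y' ∧ r * y' ≤ b ∧ y' ≤ M) :
    |y - y'| ≤ b - a + 2 * M * (1 - r) := by
  obtain ⟨hy₁, hy₂, hy₃⟩ := hy
  obtain ⟨hy₁', hy₂', hy₃'⟩ := hy'
  -- `y - y' ≤ y - r a = (1 - r) y + (r y - r a) ≤ (1 - r) M + (b - a) + (1 - r) a`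
  rw [abs_le]
  constructor <;> nlinarith [mul_nonneg (sub_nonneg.2 hr) (sub_nonneg.2 ha),
    mul_nonneg (sub_nonneg.2 hr) (sub_nonneg.2 hy₃),
    mul_nonneg (sub_nonneg.2 hr) (sub_nonneg.2 hy₃')]

lemma div_mem_Icc_of_monotoneOn {f h : ℝ → ℝ} {M : ℝ} (hf : MonotoneOn f (Ici 0))
    (hf₀ : f 0 = 0) (hh_nonneg : ∀ t ≥ 0, 0 ≤ h t) (hM : ∀ t > 0, f t / h t ≤ M) {t : ℝ}
    (ht : 0 ≤ t) :
    f t / h t ∈ Icc 0 M := by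
  have hg_nonneg : ∀ t ≥ 0, 0 ≤ f t / h t := fun t ht =>
    div_nonneg (hf₀ ▸ hf self_mem_Ici ht ht) (hh_nonneg t ht)
  refine ⟨hg_nonneg t ht, ?_⟩
  rcases ht.eq_or_lt with rfl | ht
  · rw [hf₀, zero_div]
    exact (hg_nonneg 1 zero_le_one).trans (hM 1 one_pos)
  · exact hM t ht

lemma div_mem_Icc_zero_one_of_monotoneOn {h : ℝ → ℝ} (hh : MonotoneOn h (Ici 0))
    (hh_nonneg : ∀ t ≥ 0, 0 ≤ h t) {s t : ℝ} (hs : 0 ≤ s) (hst : s ≤ t) : h s / h t ∈ Icc 0 1 :=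
  have ht : 0 ≤ t := hs.trans hst
  ⟨div_nonneg (hh_nonneg s hs) (hh_nonneg t ht), div_le_one_of_le₀ (hh hs ht hst) (hh_nonneg t ht)⟩

lemma abs_div_sub_plExt_le {f h : ℝ → ℝ} {M : ℝ} (hf : MonotoneOn f (Ici 0))
    (hh : MonotoneOn h (Ici 0)) (hf₀ : f 0 = 0) (hh_nonneg : ∀ t ≥ 0, 0 ≤ h t)
    (hh_pos : ∀ t > 0, 0 < h t) (hM : ∀ t > 0, f t / h t ≤ M) {n : ℕ} {T : ℝ}
    (hT : T ∈ Icc (n : ℝ) (n + 1)) (hT₀ : 0 < T) :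
    |f T / h T - plExt (fun k : ℕ => f k / h k) T| ≤
      f (n + 1 : ℕ) / h (n + 1 : ℕ) - f n / h n + 2 * M * (1 - h n / h ((n : ℝ) + 1)) := by
  have hg := fun t (ht : 0 ≤ t) => div_mem_Icc_of_monotoneOn hf hf₀ hh_nonneg hM ht
  have hf_nonneg : ∀ t ≥ 0, 0 ≤ f t := fun t ht => hf₀ ▸ hf self_mem_Ici ht ht
  have hn : (0 : ℝ) ≤ n := n.cast_nonneg
  have hn₁ : (0 : ℝ) < n + 1 := by linarith
  set r := h n / h ((n : ℝ) + 1)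
  have hr : r ≤ 1 := (div_mem_Icc_zero_one_of_monotoneOn hh hh_nonneg hn (by linarith)).2
  have hbounds : ∀ S ∈ Icc (n : ℝ) (n + 1), 0 < S →
      r * (f n / h n) ≤ f S / h S ∧ r * (f S / h S) ≤ f ((n : ℝ) + 1) / h ((n : ℝ) + 1) ∧
      f S / h S ≤ M := by
    intro S hS hS₀
    have := ratio_sandwich (hf_nonneg n hn) (hf hn hS₀.le hS.1) (hf hS₀.le hn₁.le hS.2)
      (hh_nonneg n hn) (hh hn hS₀.le hS.1) (hh hS₀.le hn₁.le hS.2) (hh_pos S hS₀)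
    exact ⟨this.1, this.2, (hg S hS₀.le).2⟩
  have hnext := hbounds _ ⟨by linarith, le_rfl⟩ hn₁
  have hcur : r * (f n / h n) ≤ f n / h n ∧
      r * (f n / h n) ≤ f ((n : ℝ) + 1) / h ((n : ℝ) + 1) ∧ f n / h n ≤ M :=
    ⟨mul_le_of_le_one_left (hg n hn).1 hr, hnext.1, (hg n hn).2⟩
  push_cast
  exact abs_sub_plExt_le_of_mem_Icc hT
    (abs_sub_le_of_ratio_bounds hr (hg n hn).2 (hbounds T hT hT₀) hcur)
    (by push_cast; exact abs_sub_le_of_ratio_bounds hr (hg n hn).2 (hbounds T hT hT₀) hnext)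

theorem BanachLimitR.toFun_div_sub_plExt_eq_zero (L : BanachLimitR) {f h : ℝ → ℝ} {M : ℝ}
    (hf : MonotoneOn f (Ici 0)) (hh : MonotoneOn h (Ici 0)) (hf₀ : f 0 = 0)
    (hh_nonneg : ∀ t ≥ 0, 0 ≤ h t) (hh_pos : ∀ t > 0, 0 < h t) (hM : ∀ t > 0, f t / h t ≤ M)
    (hf_cont : ContinuousOn f (Ici 1)) (hh_cont : ContinuousOn h (Ici 1))
    (hR : L.toSeq.toFun (fun n => h n / h ((n : ℝ) + 1)) = 1) :
    L.toFun (fun t => f (max t 1) / h (max t 1) - plExt (fun n : ℕ => f n / h n) (max t 1)) =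
      0 := by
  have hg := fun t (ht : 0 ≤ t) => div_mem_Icc_of_monotoneOn hf hf₀ hh_nonneg hM ht
  have ha : IsBddSeq fun n : ℕ => f n / h n := isBddSeq_of_mem_Icc fun n => hg n n.cast_nonneg
  have hr : IsBddSeq fun n : ℕ => h n / h ((n : ℝ) + 1) := isBddSeq_of_mem_Icc fun n =>
    div_mem_Icc_zero_one_of_monotoneOn hh hh_nonneg n.cast_nonneg
      (le_add_of_nonneg_right zero_le_one)
  have hcb : IsCb fun t => f (max t 1) / h (max t 1) := by
    refine isCb_comp_max_one (M := M) (hf_cont.div hh_cont fun t ht => (hh_pos t ?_).ne')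
      fun t ht => ?_
    · exact zero_lt_one.trans_le ht
    · have := hg t (by linarith)
      exact (abs_of_nonneg this.1).trans_le this.2
  have hbound := fun (n : ℕ) (T : ℝ) (hT : T ∈ Icc (n : ℝ) (n + 1)) (hT₁ : 1 ≤ T) =>
    abs_div_sub_plExt_le hf hh hf₀ hh_nonneg hh_pos hM hT (zero_lt_one.trans_le hT₁)
  refine L.toFun_sub_plExt_eq_zero hcb ha
    (((ha.comp _).sub ha).add (((isBddSeq_const 1).sub hr).const_mul (2 * M)))
    (fun n => (abs_nonneg _).trans (hbound n (n + 1) ⟨by linarith, le_rfl⟩ (by simp))) hbound ?_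
  rw [L.toSeq.toFun_succ_sub_add_mul_one_sub ha hr, hR]
  ring

lemma ConcaveOn.monotoneOn_of_tendsto_atTop {ψ : ℝ → ℝ} {a : ℝ} (hψ : ConcaveOn ℝ (Ici a) ψ)
    (hψ_top : Tendsto ψ atTop atTop) : MonotoneOn ψ (Ici a) := by
  intro p hp q hq hpq
  obtain ⟨z, hz, hqz⟩ := ((hψ_top.eventually_ge_atTop (ψ q)).and (eventually_gt_atTop q)).exists
  exact hψ.left_le_of_le_right'' hp (hq.trans hqz.le) hpq hqz hz

lemma OmegaInf.monotoneOn {ψ : ℝ → ℝ} (hψ : OmegaInf ψ) : MonotoneOn ψ (Ici 0) :=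
  hψ.1.monotoneOn_of_tendsto_atTop hψ.2.2.2

lemma OmegaInf.pos {ψ : ℝ → ℝ} (hψ : OmegaInf ψ) {s : ℝ} (hs : 0 < s) : 0 < ψ s := by
  by_contra! h
  obtain ⟨T, hT, hsT⟩ := ((hψ.2.2.2.eventually_gt_atTop 0).and (eventually_ge_atTop s)).exists
  have := hψ.1.right_le_of_le_left'' self_mem_Ici (hs.le.trans hsT) hs hsT
    (h.trans (hψ.2.1 0 self_mem_Ici))
  linarith

lemma OmegaInf.continuousOn {ψ : ℝ → ℝ} (hψ : OmegaInf ψ) : ContinuousOn ψ (Ioi 0) := by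
  simpa using hψ.1.continuousOn_interior

lemma MemK.pos {κ : ℝ → ℝ} (hκ : MemK κ) {t : ℝ} (ht : 0 < t) : 0 < κ t :=
  hκ.2.1 ▸ hκ.1 self_mem_Ici ht.le ht

lemma decRearr_nonneg (x : ℝ → ℝ) (t : ℝ) : 0 ≤ decRearr x t :=
  Real.sInf_nonneg fun _ hs => hs.1

lemma exists_volume_superlevel_le {x : ℝ → ℝ} (hx : Measurable x) {s₀ : ℝ}
    (hs₀ : volume {u : ℝ | 0 ≤ u ∧ s₀ < |x u|} ≠ ⊤) {τ : ℝ} (hτ : 0 < τ) :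
    ∃ s, 0 ≤ s ∧ volume {u : ℝ | 0 ≤ u ∧ s < |x u|} ≤ ENNReal.ofReal τ := by
  have hmeas : ∀ s : ℝ, NullMeasurableSet {u : ℝ | 0 ≤ u ∧ s < |x u|} volume := fun s =>
    (measurableSet_Ici.inter (measurableSet_lt measurable_const hx.abs)).nullMeasurableSet
  have hanti : Antitone fun s : ℝ => {u : ℝ | 0 ≤ u ∧ s < |x u|} := fun s s' hss' u hu =>
    ⟨hu.1, hss'.trans_lt hu.2⟩
  have hempty : (⋂ s : ℝ, {u : ℝ | 0 ≤ u ∧ s < |x u|}) = ∅ :=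
    eq_empty_of_forall_notMem fun u hu => (mem_iInter.1 hu |x u|).2.false
  have hlim := tendsto_measure_iInter_atTop hmeas hanti ⟨s₀, hs₀⟩
  rw [hempty, measure_empty] at hlim
  obtain ⟨s, hs, hs0⟩ :=
    ((hlim.eventually (gt_mem_nhds (ENNReal.ofReal_pos.2 hτ))).and (eventually_ge_atTop 0)).exists
  exact ⟨s, hs0, hs.le⟩

lemma decRearr_antitoneOn {x : ℝ → ℝ} (hx : Measurable x) : AntitoneOn (decRearr x) (Ioi 0) := by
  intro p hp q _ hpq
  by_cases hq : {s : ℝ | 0 ≤ s ∧ volume {u : ℝ | 0 ≤ u ∧ s < |x u|} ≤ ENNReal.ofReal q}.Nonempty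
  · obtain ⟨s₀, -, hs₀⟩ := hq
    refine csInf_le_csInf ⟨0, fun s hs => hs.1⟩
      (exists_volume_superlevel_le hx (ne_top_of_le_ne_top ENNReal.ofReal_ne_top hs₀) hp)
      fun s hs => ⟨hs.1, hs.2.trans (ENNReal.ofReal_le_ofReal hpq)⟩
  · rw [decRearr, not_nonempty_iff_eq_empty.1 hq, Real.sInf_empty]
    exact decRearr_nonneg x p

lemma intervalIntegrable_decRearr {x : ℝ → ℝ} (hx : Measurable x) {p q : ℝ} (hp : 0 < p)
    (hq : 0 < q) : IntervalIntegrable (decRearr x) volume p q :=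
  ((decRearr_antitoneOn hx).mono fun _ hs =>
    lt_of_lt_of_le (lt_min hp hq) hs.1).intervalIntegrable

/-- Either `x*` is integrable near `0`, or every integral `∫₀ᶜ x*` takes the junk value `0`. -/
lemma intervalIntegrable_or_integral_decRearr_eq_zero {x : ℝ → ℝ} (hx : Measurable x) :
    (∀ c ≥ 0, IntervalIntegrable (decRearr x) volume 0 c) ∨
      ∀ c ≥ 0, ∫ s in (0 : ℝ)..c, decRearr x s = 0 := by
  refine or_iff_not_imp_left.2 fun h => ?_
  simp only [not_forall] at h
  obtain ⟨c, hc, hnc⟩ := h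
  have hc : 0 < c := hc.lt_of_ne fun h => hnc (h ▸ IntervalIntegrable.refl)
  intro e he
  rcases he.eq_or_lt with rfl | he
  · exact intervalIntegral.integral_same
  · exact intervalIntegral.integral_undef fun hie =>
      hnc (hie.trans (intervalIntegrable_decRearr hx he hc))

lemma monotoneOn_integral_decRearr {x : ℝ → ℝ} (hx : Measurable x) :
    MonotoneOn (fun e => ∫ s in (0 : ℝ)..e, decRearr x s) (Ici 0) := by
  intro p (hp : 0 ≤ p) q _ hpq
  rcases intervalIntegrable_or_integral_decRearr_eq_zero hx with hint | hzero
  · exact intervalIntegral.integral_mono_interval le_rfl hp hpq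
      (Eventually.of_forall fun s => decRearr_nonneg x s) (hint q (hp.trans hpq))
  · exact (hzero p hp).trans_le (hzero q (hp.trans hpq)).ge

lemma continuousOn_integral_decRearr {x : ℝ → ℝ} (hx : Measurable x) :
    ContinuousOn (fun e => ∫ s in (0 : ℝ)..e, decRearr x s) (Ici 0) := by
  rcases intervalIntegrable_or_integral_decRearr_eq_zero hx with hint | hzero
  · intro e (he : 0 ≤ e)
    have hcont := intervalIntegral.continuousOn_primitive_interval' (hint (e + 1) (by linarith))
      (left_mem_uIcc (a := (0 : ℝ)))
    rw [uIcc_of_le (by linarith)] at hcont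
    exact (hcont e ⟨he, by linarith⟩).mono_of_mem_nhdsWithin (by
      simpa only [Ici_inter_Iic] using inter_mem_nhdsWithin (Ici 0) (Iic_mem_nhds (lt_add_one e)))
  · exact continuousOn_const.congr fun e he => hzero e he

/-- for `κ ∈ R(ψ)` and `x ∈ M₊(ψ)`, the function `φ_κ(x)` is
almost piecewise linear at infinity: `L(φ_κ(x) − p({φ_κ(x)(n)}ₙ)) = 0` for
every Banach limit `L` on `C_b([0,∞))`. -/
theorem phiKappa_almost_piecewise_linear (ψ κ : ℝ → ℝ) (hψ : OmegaInf ψ)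
    (hκ : MemK κ) (hR : RestrictedGrowth ψ κ)
    (x : ℝ → ℝ) (hx : MemMplus ψ x) (L : BanachLimitR) :
    L.toFun (fun t =>
      phiW ψ x (κ (max t 1)) - plExt (fun n => phiW ψ x (κ (n:ℝ))) (max t 1)) = 0 := by
  obtain ⟨⟨hxm, M, hM⟩, -⟩ := hx
  have hκ_mono : MonotoneOn κ (Ici 0) := hκ.1.monotoneOn
  have hκ_cont : ContinuousOn κ (Ici 1) :=
    hκ.2.2.2.2.1.continuousOn.mono (Ici_subset_Ici.2 zero_le_one)
  have hκ_maps : MapsTo κ (Ici 1) (Ioi 0) := fun t (ht : 1 ≤ t) =>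
    hκ.pos (zero_lt_one.trans_le ht)
  exact L.toFun_div_sub_plExt_eq_zero (M := M)
    ((monotoneOn_integral_decRearr hxm).comp hκ_mono hκ.2.2.1)
    (hψ.monotoneOn.comp hκ_mono hκ.2.2.1)
    (by simp [hκ.2.1])
    (fun t ht => hψ.2.1 _ (hκ.2.2.1 ht))
    (fun t ht => hψ.pos (hκ.pos ht))
    (fun t ht => hM _ (hκ.pos ht))
    ((continuousOn_integral_decRearr hxm).comp hκ_cont
      (hκ_maps.mono_right Ioi_subset_Ici_self))
    (hψ.continuousOn.comp hκ_cont hκ_maps)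
    (hR L.toSeq)
end
end

section
/- Let g ∈ C_b([0,∞)) and set a := liminf_{t→∞} C(g)(t) and b := limsup_{t→∞} C(g)(t), where C(g)(μ) := (1/μ)∫₀^μ g(s) ds is the Cesàro mean. Then the closed interval [a,b] is contained in the set { L(g) : L ∈ BL(ℝ₊) }; that is, for every c with a ≤ c ≤ b there exists a Banach limit L on C_b([0,∞)) with L(g) = c. -/
open MeasureTheory Filter Set

noncomputable section

section Aux

lemma IsCb.intInt {f : ℝ → ℝ} (hf : IsCb f) {a b : ℝ} (ha : 0 ≤ a) (hb : 0 ≤ b) :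
    IntervalIntegrable f volume a b :=
  (hf.1.mono fun x hx => le_trans (le_min ha hb) hx.1).intervalIntegrable

lemma cesaro_abs_le {f : ℝ → ℝ} (hf : IsCb f) {M : ℝ} (hM : ∀ t ∈ Ici (0:ℝ), |f t| ≤ M)
    {μ : ℝ} (hμ : 0 ≤ μ) : |cesaro f μ| ≤ M := by
  rcases eq_or_lt_of_le hμ with h | h
  · rw [cesaro, if_pos h.symm]
    exact hM 0 (mem_Ici.2 le_rfl)
  · rw [cesaro, if_neg (ne_of_gt h), abs_div, abs_of_pos h, div_le_iff₀ h]
    have := intervalIntegral.norm_integral_le_of_norm_le_const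
      (C := M) (f := f) (a := 0) (b := μ) (fun x hx => hM x (mem_Ici.2 (le_of_lt (lt_of_le_of_lt (le_min le_rfl h.le) hx.1))))
    simpa [abs_of_pos h] using this

lemma cesaro_add {f₁ f₂ : ℝ → ℝ} (h₁ : IsCb f₁) (h₂ : IsCb f₂) {μ : ℝ} (hμ : 0 ≤ μ) :
    cesaro (fun t => f₁ t + f₂ t) μ = cesaro f₁ μ + cesaro f₂ μ := by
  rcases eq_or_ne μ 0 with h | h
  · simp [cesaro, h]
  · rw [cesaro, cesaro, cesaro, if_neg h, if_neg h, if_neg h,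
      intervalIntegral.integral_add (h₁.intInt le_rfl hμ) (h₂.intInt le_rfl hμ), add_div]

lemma cesaro_smul {f : ℝ → ℝ} (hf : IsCb f) (a : ℝ) {μ : ℝ} (hμ : 0 ≤ μ) :
    cesaro (fun t => a * f t) μ = a * cesaro f μ := by
  rcases eq_or_ne μ 0 with h | h
  · simp [cesaro, h]
  · rw [cesaro, cesaro, if_neg h, if_neg h, intervalIntegral.integral_const_mul, mul_div_assoc]

lemma cesaro_nonneg {f : ℝ → ℝ} (hf : ∀ t ∈ Ici (0:ℝ), 0 ≤ f t) {μ : ℝ} (hμ : 0 ≤ μ) :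
    0 ≤ cesaro f μ := by
  rcases eq_or_lt_of_le hμ with h | h
  · rw [cesaro, if_pos h.symm]; exact hf 0 (mem_Ici.2 le_rfl)
  · rw [cesaro, if_neg (ne_of_gt h)]
    exact div_nonneg (intervalIntegral.integral_nonneg h.le fun u hu => hf u (mem_Ici.2 hu.1)) h.le

lemma cesaro_one (μ : ℝ) : cesaro (fun _ => (1:ℝ)) μ = 1 := by
  rcases eq_or_ne μ 0 with h | h
  · simp [cesaro, h]
  · simp [cesaro, h]

lemma cesaro_shift_sub_abs {f : ℝ → ℝ} (hf : IsCb f) {M : ℝ}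
    (hM : ∀ t ∈ Ici (0:ℝ), |f t| ≤ M) {s : ℝ} (hs : 0 ≤ s) {μ : ℝ} (hμ : 0 < μ) :
    |cesaro (fun t => f (t + s)) μ - cesaro f μ| ≤ 2 * M * s / μ := by
  have h1 : IntervalIntegrable f volume 0 s := hf.intInt le_rfl hs
  have h2 : IntervalIntegrable f volume s (μ + s) := hf.intInt hs (by linarith)
  have h3 : IntervalIntegrable f volume 0 μ := hf.intInt le_rfl hμ.le
  have h4 : IntervalIntegrable f volume μ (μ + s) := hf.intInt hμ.le (by linarith)
  rw [cesaro, cesaro, if_neg (ne_of_gt hμ), if_neg (ne_of_gt hμ),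
    intervalIntegral.integral_comp_add_right f s, zero_add]
  have key : ∫ x in s..(μ + s), f x = (∫ x in (0:ℝ)..μ, f x) +
      ((∫ x in μ..(μ + s), f x) - ∫ x in (0:ℝ)..s, f x) := by
    have e1 := intervalIntegral.integral_add_adjacent_intervals h1 h2
    have e2 := intervalIntegral.integral_add_adjacent_intervals h3 h4
    linarith
  rw [key, div_sub_div_same, add_sub_cancel_left, abs_div, abs_of_pos hμ,
    div_le_div_iff_of_pos_right hμ]
  have b1 : |∫ x in μ..(μ + s), f x| ≤ M * s := by
    have := intervalIntegral.norm_integral_le_of_norm_le_const (C := M) (f := f)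
      (a := μ) (b := μ + s) (fun x hx => hM x (mem_Ici.2 (by
        have := hx.1; simp only [min_def] at this; split_ifs at this <;> linarith)))
    simpa [abs_of_nonneg hs] using this
  have b2 : |∫ x in (0:ℝ)..s, f x| ≤ M * s := by
    have := intervalIntegral.norm_integral_le_of_norm_le_const (C := M) (f := f)
      (a := 0) (b := s) (fun x hx => hM x (mem_Ici.2 (by
        have := hx.1; simp only [min_def] at this; split_ifs at this <;> linarith)))
    simpa [abs_of_nonneg hs] using this
  calc |(∫ x in μ..(μ + s), f x) - ∫ x in (0:ℝ)..s, f x|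
      ≤ |∫ x in μ..(μ + s), f x| + |∫ x in (0:ℝ)..s, f x| := abs_sub _ _
    _ ≤ 2 * M * s := by linarith

lemma cesaro_continuousAt {f : ℝ → ℝ} (hf : IsCb f) {μ : ℝ} (hμ : 0 < μ) :
    ContinuousAt (cesaro f) μ := by
  have hG : ContinuousAt (fun u : ℝ => ∫ x in (0:ℝ)..u, f x) μ := by
    have h := intervalIntegral.integral_hasDerivAt_right (hf.intInt le_rfl hμ.le)
      (ContinuousOn.stronglyMeasurableAtFilter isOpen_Ioi (hf.1.mono Ioi_subset_Ici_self)
        μ hμ)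
      ((hf.1.continuousAt (Ici_mem_nhds hμ)))
    exact h.continuousAt
  have h2 : ContinuousAt (fun u : ℝ => (∫ x in (0:ℝ)..u, f x) / u) μ :=
    hG.div continuousAt_id (ne_of_gt hμ)
  apply h2.congr
  filter_upwards [eventually_ne_nhds (ne_of_gt hμ)] with u hu
  rw [cesaro, if_neg hu]

end Aux

/-- for `g ∈ C_b([0,∞))`, every value `c` in the interval
`[liminf C(g), limsup C(g)]` is attained by some Banach limit: `L(g) = c`. -/
theorem exists_banachLimit_eq_of_between_cesaro (g : ℝ → ℝ) (hg : IsCb g) (c : ℝ)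
    (hc1 : liminf (cesaro g) atTop ≤ c) (hc2 : c ≤ limsup (cesaro g) atTop) :
    ∃ L : BanachLimitR, L.toFun g = c := by
  obtain ⟨M, hM⟩ := hg.2
  -- boundedness of cesaro g at infinity
  have hFb : ∀ μ : ℝ, 0 ≤ μ → |cesaro g μ| ≤ M := fun μ hμ => cesaro_abs_le hg hM hμ
  have hBle : IsBoundedUnder (· ≤ ·) atTop (cesaro g) :=
    ⟨M, eventually_atTop.2 ⟨0, fun μ hμ => (abs_le.1 (hFb μ hμ)).2⟩⟩
  have hBge : IsBoundedUnder (· ≥ ·) atTop (cesaro g) :=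
    ⟨-M, eventually_atTop.2 ⟨0, fun μ hμ => (abs_le.1 (hFb μ hμ)).1⟩⟩
  -- key: find points where cesaro g is close to c
  have key : ∀ T : ℝ, 1 ≤ T → ∀ ε : ℝ, 0 < ε → ∃ t, T ≤ t ∧ |cesaro g t - c| < ε := by
    intro T hT ε hε
    by_cases hex : ∃ t, T ≤ t ∧ cesaro g t = c
    · obtain ⟨t, ht, hte⟩ := hex
      exact ⟨t, ht, by simp [hte, hε]⟩
    push_neg at hex
    by_cases h1 : ∀ t, T ≤ t → c < cesaro g t
    · have hfr : ∃ᶠ μ in atTop, cesaro g μ < c + ε :=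
        frequently_lt_of_liminf_lt hBle.isCoboundedUnder_ge (lt_of_le_of_lt hc1 (by linarith))
      obtain ⟨t, ht, hlt⟩ := (hfr.and_eventually (eventually_ge_atTop T)).exists
      refine ⟨t, hlt, ?_⟩
      have := h1 t hlt
      rw [abs_lt]; constructor <;> linarith
    by_cases h2 : ∀ t, T ≤ t → cesaro g t < c
    · have hfr : ∃ᶠ μ in atTop, c - ε < cesaro g μ :=
        frequently_lt_of_lt_limsup hBge.isCoboundedUnder_le (lt_of_lt_of_le (by linarith) hc2)
      obtain ⟨t, ht, hlt⟩ := (hfr.and_eventually (eventually_ge_atTop T)).exists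
      refine ⟨t, hlt, ?_⟩
      have := h2 t hlt
      rw [abs_lt]; constructor <;> linarith
    push_neg at h1 h2
    obtain ⟨t1, ht1, h1'⟩ := h1
    obtain ⟨t2, ht2, h2'⟩ := h2
    have h1'' : cesaro g t1 < c := lt_of_le_of_ne h1' (hex t1 ht1)
    have h2'' : c < cesaro g t2 := lt_of_le_of_ne h2' fun h => hex t2 ht2 h.symm
    exfalso
    have hco : ContinuousOn (cesaro g) (uIcc t1 t2) := by
      intro x hx
      have hx1 : (1:ℝ) ≤ x := le_trans (le_min (le_trans hT ht1) (le_trans hT ht2)) hx.1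
      exact (cesaro_continuousAt hg (by linarith)).continuousWithinAt
    obtain ⟨t, htmem, hte⟩ := intermediate_value_uIcc hco
      (show c ∈ uIcc (cesaro g t1) (cesaro g t2) by
        rw [uIcc_of_le (h1''.le.trans h2''.le)]; exact ⟨h1''.le, h2''.le⟩)
    exact hex t (le_trans (le_min ht1 ht2) htmem.1) hte
  -- choose a sequence t n → ∞ with cesaro g (t n) → c
  have hseq : ∀ n : ℕ, ∃ t : ℝ, (n:ℝ) + 1 ≤ t ∧ |cesaro g t - c| < 1 / ((n:ℝ) + 1) := by
    intro n
    have hn : (0:ℝ) ≤ (n:ℝ) := Nat.cast_nonneg n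
    exact key ((n:ℝ) + 1) (by linarith) (1 / ((n:ℝ) + 1)) (by positivity)
  choose t ht1 ht2 using hseq
  have htT : Tendsto t atTop atTop :=
    tendsto_atTop_mono ht1 (tendsto_atTop_add_const_right _ 1 tendsto_natCast_atTop_atTop)
  have ht1' : ∀ n, (1:ℝ) ≤ t n := fun n =>
    le_trans (by have : (0:ℝ) ≤ (n:ℝ) := Nat.cast_nonneg n; linarith) (ht1 n)
  have htpos : ∀ n, (0:ℝ) ≤ t n := fun n => le_trans zero_le_one (ht1' n)
  have hclim : Tendsto (fun n => cesaro g (t n)) atTop (nhds c) := by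
    have h0 : Tendsto (fun n : ℕ => cesaro g (t n) - c) atTop (nhds 0) := by
      exact squeeze_zero_norm (a := fun n : ℕ => 1 / ((n:ℝ) + 1))
        (fun n => by rw [Real.norm_eq_abs]; exact (ht2 n).le)
        tendsto_one_div_add_atTop_nhds_zero_nat
    simpa using h0.add_const c
  -- the ultrafilter
  let U : Ultrafilter ℕ := Ultrafilter.of atTop
  have hU : (U : Filter ℕ) ≤ atTop := Ultrafilter.of_le atTop
  -- the candidate functional
  set Φ : (ℝ → ℝ) → ℝ := fun f => limUnder (U : Filter ℕ) (fun n => cesaro f (t n)) with hΦ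
  have hlim : ∀ f : ℝ → ℝ, IsCb f →
      Tendsto (fun n => cesaro f (t n)) (U : Filter ℕ) (nhds (Φ f)) := by
    intro f hf
    obtain ⟨Mf, hMf⟩ := hf.2
    have hmem : ∀ n, cesaro f (t n) ∈ Icc (-Mf) Mf :=
      fun n => abs_le.1 (cesaro_abs_le hf hMf (htpos n))
    have hle : (U.map fun n => cesaro f (t n) : Filter ℝ) ≤ 𝓟 (Icc (-Mf) Mf) := by
      rw [Filter.le_principal_iff]
      exact Filter.mem_map.2 (Filter.univ_mem' hmem)
    obtain ⟨x, _, hx⟩ := isCompact_Icc.ultrafilter_le_nhds (U.map fun n => cesaro f (t n)) hle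
    have hx' : Tendsto (fun n => cesaro f (t n)) (U : Filter ℕ) (nhds x) := hx
    have hΦf : Φ f = x := by rw [hΦ]; exact hx'.limUnder_eq
    rwa [hΦf]
  refine ⟨⟨Φ, ?_, ?_, ?_, ?_, ?_⟩, ?_⟩
  · -- map_add
    intro f₁ f₂ h₁ h₂
    have : Tendsto (fun n => cesaro (fun u => f₁ u + f₂ u) (t n)) (U : Filter ℕ)
        (nhds (Φ f₁ + Φ f₂)) := by
      have := (hlim f₁ h₁).add (hlim f₂ h₂)
      apply this.congr
      intro n
      exact (cesaro_add h₁ h₂ (htpos n)).symm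
    exact this.limUnder_eq
  · -- map_smul
    intro a f hf
    have : Tendsto (fun n => cesaro (fun u => a * f u) (t n)) (U : Filter ℕ)
        (nhds (a * Φ f)) := by
      have := (hlim f hf).const_mul a
      apply this.congr
      intro n
      exact (cesaro_smul hf a (htpos n)).symm
    exact this.limUnder_eq
  · -- pos
    intro f hf hfpos
    exact ge_of_tendsto' (hlim f hf) fun n => cesaro_nonneg hfpos (htpos n)
  · -- map_one
    have : Tendsto (fun n => cesaro (fun _ => (1:ℝ)) (t n)) (U : Filter ℕ) (nhds 1) := by
      simp only [cesaro_one]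
      exact tendsto_const_nhds
    exact this.limUnder_eq
  · -- shift_inv
    intro f hf s hs
    obtain ⟨Mf, hMf⟩ := hf.2
    have hd : Tendsto (fun n => cesaro (fun u => f (u + s)) (t n) - cesaro f (t n))
        atTop (nhds 0) := by
      apply squeeze_zero_norm (a := fun n => 2 * Mf * s / t n)
      · intro n
        rw [Real.norm_eq_abs]
        exact cesaro_shift_sub_abs hf hMf hs (lt_of_lt_of_le zero_lt_one (ht1' n))
      · exact Tendsto.div_atTop tendsto_const_nhds htT
    have : Tendsto (fun n => cesaro (fun u => f (u + s)) (t n)) (U : Filter ℕ) (nhds (Φ f)) := by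
      have h := (hd.mono_left hU).add (hlim f hf)
      simpa using h.congr fun n => by ring
    exact this.limUnder_eq
  · -- value on g
    exact (hclim.mono_left hU).limUnder_eq
end
end
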